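/- arXiv:1509.05668 — 3 statements merged into one kernel-verified Lean document; each statement's English description precedes it below -/
import Mathlib

section
/- Let g : [0,Δ] → ℝ be continuous with Δ > 0 and suppose lim_{x→0+} g(x)/x exists. Then for every ε > 0 there exists a polynomial g_N with g_N(0) = 0 such that |g(x) - g_N(x)| ≤ ε x for all x ∈ [0,Δ]. -/
/-! Since `g(x)/x` has a limit `L` at `0⁺`, continuity forces `g 0 = 0`, and `F := g(x)/x`, with
`F 0 := L`, is continuous on `[0,Δ]`. Weierstrass gives a polynomial `P` with `|F - P| ≤ ε` there,
and `g_N := X * P` satisfies `|g(x) - x P(x)| = x |F(x) - P(x)| ≤ ε x`. -/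

open Set Filter Topology Function Polynomial

section DivSelf

variable {g : ℝ → ℝ} {s : Set ℝ} {L : ℝ}

lemma ContinuousWithinAt.eq_zero_of_tendsto_div_self (hg : ContinuousWithinAt g s 0)
    [(𝓝[s \ {0}] (0 : ℝ)).NeBot] (hL : Tendsto (fun x => g x / x) (𝓝[s \ {0}] 0) (𝓝 L)) :
    g 0 = 0 := by
  have hg_zero : Tendsto g (𝓝[s \ {0}] 0) (𝓝 0) := by
    have hprod : Tendsto (fun x => g x / x * x) (𝓝[s \ {0}] 0) (𝓝 (L * 0)) :=
      hL.mul (tendsto_id.mono_left nhdsWithin_le_nhds)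
    rw [mul_zero] at hprod
    refine hprod.congr' ?_
    filter_upwards [self_mem_nhdsWithin] with x hx
    exact div_mul_cancel₀ _ hx.2
  have hg_cont : Tendsto g (𝓝[s \ {0}] 0) (𝓝 (g 0)) :=
    hg.tendsto.mono_left (nhdsWithin_mono _ sdiff_subset)
  exact tendsto_nhds_unique hg_cont hg_zero

lemma continuousOn_update_div_self (hg : ContinuousOn g s)
    (hL : Tendsto (fun x => g x / x) (𝓝[s \ {0}] 0) (𝓝 L)) :
    ContinuousOn (update (fun x => g x / x) 0 L) s := by
  intro x hx
  rcases eq_or_ne x 0 with rfl | hx0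
  · exact continuousWithinAt_update_same.mpr hL
  · exact (continuousWithinAt_update_of_ne hx0).mpr
      ((hg x hx).div continuousWithinAt_id hx0)

lemma eq_mul_update_div_self (hg0 : g 0 = 0) (x : ℝ) :
    g x = x * update (fun x => g x / x) 0 L x := by
  rcases eq_or_ne x 0 with rfl | hx0
  · simp [hg0]
  · rw [update_of_ne hx0, mul_div_cancel₀ _ hx0]

end DivSelf

/-- Relative Weierstrass approximation: if `g : [0,Δ] → ℝ` is continuous and
`lim_{x→0+} g(x)/x` exists, then for every `ε > 0` there is a polynomial `g_N` with
`g_N(0) = 0` and `|g(x) - g_N(x)| ≤ ε x` for all `x ∈ [0,Δ]`. -/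
theorem relative_weierstrass_approximation
    (Δ : ℝ) (hΔ : 0 < Δ) (g : ℝ → ℝ) (hg : ContinuousOn g (Icc 0 Δ))
    (hlim : ∃ L : ℝ, Filter.Tendsto (fun x => g x / x) (nhdsWithin 0 (Ioi 0)) (nhds L)) :
    ∀ ε > (0 : ℝ), ∃ gN : Polynomial ℝ, gN.eval 0 = 0 ∧
      ∀ x ∈ Icc (0 : ℝ) Δ, |g x - gN.eval x| ≤ ε * x := by
  obtain ⟨L, hL⟩ := hlim
  intro ε hε
  have hpunctured : 𝓝[Icc 0 Δ \ {0}] (0 : ℝ) = 𝓝[>] 0 := by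
    rw [Icc_sdiff_left, nhdsWithin_Ioc_eq_nhdsGT hΔ]
  rw [← hpunctured] at hL
  have : (𝓝[Icc 0 Δ \ {0}] (0 : ℝ)).NeBot := hpunctured ▸ inferInstance
  have hg0 : g 0 = 0 := (hg 0 (left_mem_Icc.2 hΔ.le)).eq_zero_of_tendsto_div_self hL
  obtain ⟨P, hP⟩ :=
    exists_polynomial_near_of_continuousOn 0 Δ _ (continuousOn_update_div_self hg hL) ε hε
  refine ⟨X * P, by simp, fun x hx => ?_⟩
  calc |g x - (X * P).eval x| = x * |update (fun x => g x / x) 0 L x - P.eval x| := by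
        rw [eq_mul_update_div_self hg0 x, eval_mul, eval_X, ← mul_sub, abs_mul, abs_of_nonneg hx.1]
    _ ≤ x * ε := by
        gcongr
        · exact hx.1
        · rw [abs_sub_comm]
          exact (hP x hx).le
    _ = ε * x := mul_comm x ε
end

section
/- Let SNR > 0 and define C(ν) = (1/(2π)) ∬_{ℝ²} (1/2) ln⁺(ν / N₁(t,ω)) dt dω and S(ν) = ∬_{ℝ²} (ν - N₁(t,ω))⁺ dt dω with N₁(t,ω) = (θ²/(2π)) exp(γ^{-2}t² + γ²ω²). If ν is chosen so that S(ν) = 2πθ²·SNR, then C(ν) = (1/8)[W₀((4π·SNR - 1)/e) + 1]², where W₀ is the principal branch of the Lambert W function. -/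
open MeasureTheory Real

/-! The substitution `(t, ω) ↦ (γ⁻¹t, γω)` preserves Lebesgue measure and turns `N₁` into
`A e^{t² + ω²}` with `A = θ²/(2π)`; in polar coordinates a function of `t² + ω² = u` integrates
to `π ∫₀^∞ g(u) du`. Writing the water level as `ν = A e^L`, this gives
`S(ν) = π A ((L - 1) e^L + 1)` and `C(ν) = L²/8`. The power constraint becomes
`(L - 1) e^{L - 1} = (4π·SNR - 1)/e` with `L - 1 ≥ -1`, and `y ↦ y e^y` is injective on
`[-1, ∞)`, so `L - 1 = W₀((4π·SNR - 1)/e)`. -/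

theorem measurePreserving_prodMap_inv_mul_mul {a : ℝ} (ha : a ≠ 0) :
    MeasurePreserving (Prod.map (a⁻¹ * ·) (a * ·)) (volume : Measure (ℝ × ℝ)) volume := by
  refine ⟨by fun_prop, ?_⟩
  rw [Measure.volume_eq_prod, ← Measure.map_prod_map _ _ (measurable_const_mul _)
    (measurable_const_mul _), Real.map_volume_mul_left (inv_ne_zero ha),
    Real.map_volume_mul_left ha, Measure.prod_smul_left, Measure.prod_smul_right, smul_smul,
    ← ENNReal.ofReal_mul (abs_nonneg _), ← abs_mul, inv_inv, mul_inv_cancel₀ ha, abs_one,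
    ENNReal.ofReal_one, one_smul]

theorem integral_comp_inv_mul_mul {E : Type*} [NormedAddCommGroup E] [NormedSpace ℝ E]
    {a : ℝ} (ha : a ≠ 0) (f : ℝ × ℝ → E) :
    ∫ z : ℝ × ℝ, f (a⁻¹ * z.1, a * z.2) = ∫ z, f z :=
  (measurePreserving_prodMap_inv_mul_mul ha).integral_comp'
    (f := (MeasurableEquiv.mulLeft₀ a⁻¹ (inv_ne_zero ha)).prodCongr
      (MeasurableEquiv.mulLeft₀ a ha)) f

theorem integral_comp_sq_add_sq (g : ℝ → ℝ) :
    ∫ z : ℝ × ℝ, g (z.1 ^ 2 + z.2 ^ 2) = π * ∫ u in Set.Ioi 0, g u := by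
  have hr : ∫ r in Set.Ioi (0 : ℝ), r * g (r ^ 2) = (1 / 2) * ∫ u in Set.Ioi 0, g u := by
    have h := integral_comp_rpow_Ioi g two_ne_zero
    have hEq : ∀ r ∈ Set.Ioi (0 : ℝ),
        (|(2 : ℝ)| * r ^ ((2 : ℝ) - 1)) • g (r ^ (2 : ℝ)) = 2 * (r * g (r ^ 2)) := by
      intro r _
      norm_num [Real.rpow_two]
      ring
    rw [setIntegral_congr_fun measurableSet_Ioi hEq, integral_const_mul] at h
    linarith
  calc ∫ z : ℝ × ℝ, g (z.1 ^ 2 + z.2 ^ 2)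
      = ∫ p in polarCoord.target, p.1 * g (p.1 ^ 2) := by
        rw [← integral_comp_polarCoord_symm]
        refine setIntegral_congr_fun polarCoord.open_target.measurableSet fun p _ => ?_
        simp only [polarCoord_symm_apply, smul_eq_mul]
        congr 2
        linear_combination p.1 ^ 2 * Real.sin_sq_add_cos_sq p.2
    _ = (∫ r in Set.Ioi 0, r * g (r ^ 2)) * ∫ _ in Set.Ioo (-π) π, (1 : ℝ) := by
        rw [polarCoord_target, Measure.volume_eq_prod, ← setIntegral_prod_mul]
        simp
    _ = π * ∫ u in Set.Ioi 0, g u := by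
        rw [hr, setIntegral_const, Real.volume_real_Ioo_of_le (by linarith [pi_pos])]
        simp only [smul_eq_mul, mul_one]
        ring

theorem integral_comp_inv_mul_sq_add_mul_sq {a : ℝ} (ha : a ≠ 0) (g : ℝ → ℝ) :
    ∫ z : ℝ × ℝ, g ((a⁻¹ * z.1) ^ 2 + (a * z.2) ^ 2) = π * ∫ u in Set.Ioi 0, g u := by
  rw [integral_comp_inv_mul_mul ha fun z => g (z.1 ^ 2 + z.2 ^ 2), integral_comp_sq_add_sq]

theorem setIntegral_Ioi_eq_intervalIntegral_of_eq_zero {E : Type*} [NormedAddCommGroup E]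
    [NormedSpace ℝ E] {g : ℝ → E} {a b : ℝ} (hab : a ≤ b) (hg : IntegrableOn g (Set.Ioc a b))
    (hg0 : ∀ u, b < u → g u = 0) :
    ∫ u in Set.Ioi a, g u = ∫ u in a..b, g u := by
  have hzero : Set.EqOn g 0 (Set.Ioi b) := hg0
  rw [← Set.Ioc_union_Ioi_eq_Ioi hab, setIntegral_union (Set.Ioc_disjoint_Ioi le_rfl)
    measurableSet_Ioi hg ((integrableOn_congr_fun hzero measurableSet_Ioi).2 integrableOn_zero),
    setIntegral_congr_fun measurableSet_Ioi hzero, intervalIntegral.integral_of_le hab]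
  simp

theorem integral_Ioi_max_zero_sub (L : ℝ) (hL : 0 ≤ L) :
    ∫ u in Set.Ioi 0, max 0 (L - u) = L ^ 2 / 2 := by
  rw [setIntegral_Ioi_eq_intervalIntegral_of_eq_zero hL
    (by fun_prop : Continuous _).integrableOn_Ioc
    fun u hu => max_eq_left (by linarith)]
  calc ∫ u in (0 : ℝ)..L, max 0 (L - u) = ∫ u in (0 : ℝ)..L, (L - u) :=
        intervalIntegral.integral_congr fun u hu => by
          rw [Set.uIcc_of_le hL] at hu
          exact max_eq_right (by linarith [hu.2])
    _ = L ^ 2 / 2 := by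
      rw [intervalIntegral.integral_sub intervalIntegrable_const
        intervalIntegral.intervalIntegrable_id]
      simp only [intervalIntegral.integral_const, integral_id, smul_eq_mul]
      ring

theorem integral_Ioi_max_zero_sub_exp (A L : ℝ) (hA : 0 ≤ A) (hL : 0 ≤ L) :
    ∫ u in Set.Ioi 0, max 0 (A * exp L - A * exp u) = A * ((L - 1) * exp L + 1) := by
  have hmono : ∀ u v : ℝ, u ≤ v → A * exp u ≤ A * exp v := fun u v h =>
    mul_le_mul_of_nonneg_left (exp_le_exp.2 h) hA
  rw [setIntegral_Ioi_eq_intervalIntegral_of_eq_zero hL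
    (by fun_prop : Continuous _).integrableOn_Ioc
    fun u hu => max_eq_left (by linarith [hmono L u hu.le])]
  calc ∫ u in (0 : ℝ)..L, max 0 (A * exp L - A * exp u)
      = ∫ u in (0 : ℝ)..L, (A * exp L - A * exp u) :=
        intervalIntegral.integral_congr fun u hu => by
          rw [Set.uIcc_of_le hL] at hu
          exact max_eq_right (by linarith [hmono u L hu.2])
    _ = A * ((L - 1) * exp L + 1) := by
      rw [intervalIntegral.integral_sub intervalIntegrable_const
        ((continuous_exp.intervalIntegrable 0 L).const_mul A),
        intervalIntegral.integral_const, intervalIntegral.integral_const_mul, integral_exp]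
      simp only [smul_eq_mul, sub_zero, exp_zero]
      ring

theorem strictMonoOn_mul_exp : StrictMonoOn (fun y : ℝ => y * exp y) (Set.Ici (-1)) := by
  refine strictMonoOn_of_deriv_pos (convex_Ici _) (by fun_prop) fun y hy => ?_
  rw [interior_Ici, Set.mem_Ioi] at hy
  have hd : HasDerivAt (fun y => y * exp y) (1 * exp y + y * exp y) y :=
    (hasDerivAt_id y).mul (hasDerivAt_exp y)
  rw [hd.deriv]
  nlinarith [exp_pos y]

theorem apply_mul_exp_eq_of_lambertW {W : ℝ → ℝ}
    (hW : ∀ x : ℝ, -1 / exp 1 ≤ x → W x * exp (W x) = x ∧ -1 ≤ W x) {y : ℝ} (hy : -1 ≤ y) :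
    W (y * exp y) = y := by
  have hmin : -1 / exp 1 ≤ y * exp y := by
    rw [neg_div, one_div, ← exp_neg, ← neg_one_mul]
    exact strictMonoOn_mul_exp.monotoneOn Set.self_mem_Ici hy hy
  obtain ⟨hWeq, hWge⟩ := hW _ hmin
  exact strictMonoOn_mul_exp.injOn hWge hy hWeq

theorem lt_of_integral_max_zero_sub_pos {α : Type*} [MeasurableSpace α] {μ : Measure α}
    {f : α → ℝ} {A ν : ℝ} (hf : ∀ z, A ≤ f z) (h : 0 < ∫ z, max 0 (ν - f z) ∂μ) : A < ν := by
  by_contra! hνA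
  have hzero : ∀ z, max 0 (ν - f z) = 0 := fun z => max_eq_left (by linarith [hf z])
  simp only [hzero, integral_zero, lt_irrefl] at h

/-- Closed-form waterfilling capacity for the Gaussian Weyl symbol (Example 1, `r = 1`):
with `N₁(t,ω) = (θ²/(2π)) exp(γ⁻²t² + γ²ω²)`, if `ν` satisfies
`∬ (ν - N₁)⁺ = 2πθ²·SNR`, then
`(1/(2π)) ∬ ½ ln⁺(ν/N₁) = (1/8)[W₀((4π·SNR - 1)/e) + 1]²`, where `W₀` is the principal
branch of the Lambert W function (`W₀(x) e^{W₀(x)} = x`, `W₀(x) ≥ -1`). -/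
theorem heat_channel_capacity_closed_form
    (SNR θ γ : ℝ) (hSNR : 0 < SNR) (hθ : 0 < θ) (hγ : 0 < γ)
    (W0 : ℝ → ℝ)
    (hW0 : ∀ x : ℝ, -1 / Real.exp 1 ≤ x →
      W0 x * Real.exp (W0 x) = x ∧ -1 ≤ W0 x)
    (N1 : ℝ × ℝ → ℝ)
    (hN1 : ∀ t ω : ℝ, N1 (t, ω) =
      θ ^ 2 / (2 * π) * Real.exp (γ ^ (-2 : ℤ) * t ^ 2 + γ ^ 2 * ω ^ 2))
    (ν : ℝ)
    (hν : (∫ z : ℝ × ℝ, max 0 (ν - N1 z)) = 2 * π * θ ^ 2 * SNR) :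
    (1 / (2 * π)) * ∫ z : ℝ × ℝ, (1 / 2) * max 0 (Real.log (ν / N1 z)) =
      (1 / 8) * (W0 ((4 * π * SNR - 1) / Real.exp 1) + 1) ^ 2 := by
  set A := θ ^ 2 / (2 * π) with hA_def
  have hA : 0 < A := by positivity
  have hN1q : ∀ z, N1 z = A * exp ((γ⁻¹ * z.1) ^ 2 + (γ * z.2) ^ 2) := by
    rintro ⟨t, ω⟩
    rw [hN1, zpow_neg, zpow_ofNat, mul_pow, mul_pow, inv_pow]
  have hνA : A < ν := lt_of_integral_max_zero_sub_pos
    (fun z => (hN1q z).symm ▸ le_mul_of_one_le_right hA.le (one_le_exp (by positivity)))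
    (by rw [hν]; positivity)
  obtain ⟨L, hL, rfl⟩ : ∃ L, 0 < L ∧ ν = A * exp L :=
    ⟨log (ν / A), log_pos ((one_lt_div hA).2 hνA), by
      rw [exp_log (div_pos (hA.trans hνA) hA), mul_div_cancel₀ _ hA.ne']⟩
  have hS : ∫ z : ℝ × ℝ, max 0 (A * exp L - N1 z) = π * (A * ((L - 1) * exp L + 1)) := by
    simp_rw [hN1q]
    rw [integral_comp_inv_mul_sq_add_mul_sq hγ.ne' fun u => max 0 (A * exp L - A * exp u),
      integral_Ioi_max_zero_sub_exp A L hA.le hL.le]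
  have hC : ∫ z : ℝ × ℝ, (1 / 2) * max 0 (log (A * exp L / N1 z)) =
      (1 / 2) * (π * (L ^ 2 / 2)) := by
    simp_rw [hN1q, mul_div_mul_left _ _ hA.ne', ← exp_sub, log_exp]
    rw [integral_const_mul, integral_comp_inv_mul_sq_add_mul_sq hγ.ne' fun u => max 0 (L - u),
      integral_Ioi_max_zero_sub L hL.le]
  have hWL : W0 ((4 * π * SNR - 1) / exp 1) = L - 1 := by
    have hwater : (L - 1) * exp L + 1 = 4 * π * SNR := by
      rw [hS, hA_def] at hν
      field_simp at hν
      nlinarith [pi_pos]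
    rw [show (4 * π * SNR - 1) / exp 1 = (L - 1) * exp (L - 1) by rw [exp_sub, ← hwater]; ring]
    exact apply_mul_exp_eq_of_lambertW hW0 (by linarith)
  rw [hC, hWL]
  field_simp
  ring
end

section
/- Let SDR ≥ 1, σ > 0, γ > 0, and define R(λ) = (1/(2π)) ∬_{ℝ²} max{0, (1/2) ln(Φ₁(t,ω)/λ)} dt dω and D(λ) = ∬_{ℝ²} min{λ, Φ₁(t,ω)} dt dω where Φ₁(t,ω) = (σ²/(2π)) exp(-(γ^{-2}t² + γ²ω²)). If λ is chosen so that D(λ) = E/SDR with E = ∬ Φ₁ dt dω = σ²/2, then R(λ) = (1/8)[W_{-1}(-1/(e·SDR)) + 1]², where W_{-1} is the lower branch of the Lambert W function. -/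
/-!
Write `Φ₁ = A e^{-q}` with `A = σ²/(2π)` and `q(t, ω) = γ⁻²t² + γ²ω²`. Since `q` has
determinant `1`, the superlevel set `{Φ₁ > u}` is an ellipse of area `π log (A/u)`, and the
layer-cake formula reduces both integrals to one-dimensional ones: with the effective water level
`m = min λ A` and `c = log (A/m) ≥ 0`, the distortion is `π m (c + 1)` and the rate integral is
`π c²/4`. As `E = π A = π m e^c`, the constraint `D(λ) = E/SDR` reads `(c + 1) SDR = e^c`, that
is `-(c + 1) e^{-(c + 1)} = -1/(e SDR)`; since `x ↦ x eˣ` is injective on `(-∞, -1]`, this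
identifies `W₋₁(-1/(e SDR)) = -(c + 1)`, and the rate is `c²/8 = (W₋₁(-1/(e SDR)) + 1)²/8`.
-/

open MeasureTheory Real Set

theorem measurePreserving_inv_mul_prod_mul {a : ℝ} (ha : a ≠ 0) :
    MeasurePreserving (fun z : ℝ × ℝ => (a⁻¹ * z.1, a * z.2)) volume volume := by
  refine ⟨by fun_prop, ?_⟩
  have h := Measure.map_prod_map (volume : Measure ℝ) volume
    (measurable_const_mul a⁻¹) (measurable_const_mul a)
  rw [Real.map_volume_mul_left (inv_ne_zero ha), Real.map_volume_mul_left ha,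
    Measure.prod_smul_left, Measure.prod_smul_right, smul_smul, inv_inv,
    ← ENNReal.ofReal_mul (abs_nonneg a), ← abs_mul, mul_inv_cancel₀ ha, abs_one,
    ENNReal.ofReal_one, one_smul] at h
  rw [Measure.volume_eq_prod]
  exact h.symm

theorem volume_setOf_sq_add_sq_lt (C : ℝ) :
    volume {z : ℝ × ℝ | z.1 ^ 2 + z.2 ^ 2 < C} = ENNReal.ofReal (π * C) := by
  rcases le_or_gt C 0 with hC | hC
  · have hempty : {z : ℝ × ℝ | z.1 ^ 2 + z.2 ^ 2 < C} = ∅ :=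
      eq_empty_of_forall_notMem fun z (hz : _ < C) => by
        nlinarith [sq_nonneg z.1, sq_nonneg z.2]
    rw [hempty, measure_empty, eq_comm, ENNReal.ofReal_eq_zero]
    exact mul_nonpos_of_nonneg_of_nonpos pi_pos.le hC
  · have hball : Complex.measurableEquivRealProd ⁻¹' {z : ℝ × ℝ | z.1 ^ 2 + z.2 ^ 2 < C}
        = Metric.ball (0 : ℂ) (√C) := by
      ext w
      rw [mem_preimage, Metric.mem_ball, dist_zero_right, Real.lt_sqrt (norm_nonneg w),
        Complex.sq_norm, Complex.normSq_apply]
      simp [sq]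
    rw [← Complex.volume_preserving_equiv_real_prod.measure_preimage
      (measurableSet_lt (by fun_prop) measurable_const).nullMeasurableSet, hball,
      Complex.volume_ball, ← ENNReal.ofReal_pow (sqrt_nonneg C), sq_sqrt hC.le,
      ← ENNReal.ofReal_coe_nnreal, NNReal.coe_real_pi, ← ENNReal.ofReal_mul hC.le, mul_comm]

theorem volume_setOf_ellipse_lt {γ : ℝ} (hγ : γ ≠ 0) (C : ℝ) :
    volume {z : ℝ × ℝ | γ ^ (-2 : ℤ) * z.1 ^ 2 + γ ^ 2 * z.2 ^ 2 < C}
      = ENNReal.ofReal (π * C) := by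
  have hpre : (fun z : ℝ × ℝ => (γ⁻¹ * z.1, γ * z.2)) ⁻¹' {z | z.1 ^ 2 + z.2 ^ 2 < C}
      = {z : ℝ × ℝ | γ ^ (-2 : ℤ) * z.1 ^ 2 + γ ^ 2 * z.2 ^ 2 < C} := by
    ext z
    simp [mul_pow, zpow_neg, inv_pow]
  rw [← hpre, (measurePreserving_inv_mul_prod_mul hγ).measure_preimage
    (measurableSet_lt (by fun_prop) measurable_const).nullMeasurableSet,
    volume_setOf_sq_add_sq_lt]

theorem lintegral_Ioo_ofReal_eq_sub_of_hasDerivAt {f F : ℝ → ℝ} {a b : ℝ} (hab : a ≤ b)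
    (hcont : ContinuousOn F (Icc a b)) (hderiv : ∀ x ∈ Ioo a b, HasDerivAt F (f x) x)
    (hf : ∀ x ∈ Ioo a b, 0 ≤ f x) :
    ∫⁻ x in Ioo a b, ENNReal.ofReal (f x) = ENNReal.ofReal (F b - F a) := by
  have hint : IntegrableOn f (Ioc a b) :=
    intervalIntegral.integrableOn_deriv_of_nonneg hcont hderiv hf
  rw [← ofReal_integral_eq_lintegral_ofReal (hint.mono_set Ioo_subset_Ioc_self)
    (ae_restrict_of_forall_mem measurableSet_Ioo hf), integral_Ioc_eq_integral_Ioo.symm,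
    ← intervalIntegral.integral_of_le hab,
    intervalIntegral.integral_eq_sub_of_hasDerivAt_of_le hab hcont hderiv
      ((intervalIntegrable_iff_integrableOn_Ioc_of_le hab).mpr hint)]

theorem lintegral_Ioo_ofReal_mul_log_div {k A m : ℝ} (hk : 0 ≤ k) (hm : 0 < m) (hmA : m ≤ A) :
    ∫⁻ u in Ioo 0 m, ENNReal.ofReal (k * log (A / u))
      = ENNReal.ofReal (k * (m * (log (A / m) + 1))) := by
  have hA : 0 < A := hm.trans_le hmA
  have hderiv : ∀ u ∈ Ioo 0 m, HasDerivAt (fun u => k * (u * log A - u * log u + u))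
      (k * log (A / u)) u := by
    intro u hu
    refine ((((hasDerivAt_id u).mul_const (log A)).sub
      (hasDerivAt_mul_log hu.1.ne')).add (hasDerivAt_id u)).const_mul k |>.congr_deriv ?_
    rw [log_div hA.ne' hu.1.ne']
    ring
  rw [lintegral_Ioo_ofReal_eq_sub_of_hasDerivAt hm.le (by fun_prop) hderiv
    fun u hu => mul_nonneg hk (log_nonneg ((one_le_div hu.1).mpr (hu.2.le.trans hmA))),
    log_div hA.ne' hm.ne']
  congr 1
  simp only [log_zero]
  ring

theorem lintegral_Ioi_ofReal_mul_sub_two_mul {k c : ℝ} (hk : 0 ≤ k) (hc : 0 ≤ c) :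
    ∫⁻ u in Ioi 0, ENNReal.ofReal (k * (c - 2 * u)) = ENNReal.ofReal (k * c ^ 2 / 4) := by
  have htail : ∫⁻ u in Ioi (c / 2), ENNReal.ofReal (k * (c - 2 * u)) = 0 :=
    setLIntegral_eq_zero measurableSet_Ioi fun u (hu : c / 2 < u) =>
      ENNReal.ofReal_eq_zero.mpr (mul_nonpos_of_nonneg_of_nonpos hk (by linarith))
  have hderiv : ∀ u ∈ Ioo 0 (c / 2), HasDerivAt (fun u => k * (c * u - u ^ 2))
      (k * (c - 2 * u)) u := by
    intro u _
    refine (((hasDerivAt_id u).const_mul c).sub (hasDerivAt_pow 2 u)).const_mul k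
      |>.congr_deriv ?_
    ring
  rw [← Ioc_union_Ioi_eq_Ioi (by positivity : (0 : ℝ) ≤ c / 2), lintegral_union
    measurableSet_Ioi (Ioc_disjoint_Ioi le_rfl), htail, add_zero,
    ← setLIntegral_congr Ioo_ae_eq_Ioc,
    lintegral_Ioo_ofReal_eq_sub_of_hasDerivAt (by linarith) (by fun_prop) hderiv
      fun u hu => mul_nonneg hk (by linarith [hu.2])]
  congr 1
  ring

theorem integral_eq_toReal_lintegral_meas_lt {α : Type*} [MeasurableSpace α] (μ : Measure α)
    {f : α → ℝ} (hf : 0 ≤ᵐ[μ] f) (hfm : AEMeasurable f μ) :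
    ∫ x, f x ∂μ = (∫⁻ t in Ioi 0, μ {x | t < f x}).toReal := by
  rw [integral_eq_lintegral_of_nonneg_ae hf hfm.aestronglyMeasurable,
    lintegral_eq_lintegral_meas_lt μ hf hfm]

theorem lintegral_meas_lt_min {α : Type*} [MeasurableSpace α] (μ : Measure α) (f : α → ℝ)
    (m : ℝ) :
    ∫⁻ t in Ioi 0, μ {x | t < min m (f x)} = ∫⁻ t in Ioo 0 m, μ {x | t < f x} := by
  have hind : ∀ t,
      μ {x | t < min m (f x)} = (Iio m).indicator (fun t => μ {x | t < f x}) t := by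
    intro t
    by_cases ht : t < m <;> simp [ht]
  simp_rw [hind]
  rw [lintegral_indicator measurableSet_Iio, Measure.restrict_restrict measurableSet_Iio,
    Iio_inter_Ioi]

noncomputable def gaussianSymbol (A γ : ℝ) (z : ℝ × ℝ) : ℝ :=
  A * exp (-(γ ^ (-2 : ℤ) * z.1 ^ 2 + γ ^ 2 * z.2 ^ 2))

section gaussianSymbol

variable {A γ : ℝ}

theorem gaussianSymbol_pos (hA : 0 < A) (z : ℝ × ℝ) : 0 < gaussianSymbol A γ z := by
  unfold gaussianSymbol; positivity

theorem gaussianSymbol_le (hA : 0 ≤ A) (z : ℝ × ℝ) : gaussianSymbol A γ z ≤ A :=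
  mul_le_of_le_one_right hA (exp_le_one_iff.mpr (neg_nonpos.mpr (by positivity)))

@[fun_prop]
theorem measurable_gaussianSymbol : Measurable (gaussianSymbol A γ) := by
  unfold gaussianSymbol; fun_prop

theorem volume_setOf_lt_gaussianSymbol (hA : 0 < A) (hγ : γ ≠ 0) {u : ℝ} (hu : 0 < u) :
    volume {z | u < gaussianSymbol A γ z} = ENNReal.ofReal (π * log (A / u)) := by
  have hset : {z | u < gaussianSymbol A γ z}
      = {z : ℝ × ℝ | γ ^ (-2 : ℤ) * z.1 ^ 2 + γ ^ 2 * z.2 ^ 2 < log (A / u)} := by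
    ext z
    rw [mem_ofPred_eq, mem_ofPred_eq, gaussianSymbol, ← log_lt_log_iff hu (by positivity),
      log_mul hA.ne' (exp_ne_zero _), log_exp, log_div hA.ne' hu.ne']
    constructor <;> intro <;> linarith
  rw [hset, volume_setOf_ellipse_lt hγ]

theorem lt_max_zero_half_log_div_iff {u m y : ℝ} (hu : 0 < u) (hm : 0 < m) (hy : 0 < y) :
    u < max 0 (1 / 2 * log (y / m)) ↔ m * exp (2 * u) < y := by
  rw [lt_max_iff, or_iff_right hu.not_gt, ← mul_lt_mul_iff_right₀ (two_pos : (0 : ℝ) < 2),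
    ← mul_assoc, mul_one_div_cancel two_ne_zero, one_mul,
    lt_log_iff_exp_lt (div_pos hy hm), lt_div_iff₀' hm]

theorem integral_min_gaussianSymbol_of_le (hγ : γ ≠ 0) {m : ℝ} (hm : 0 < m) (hmA : m ≤ A) :
    ∫ z, min m (gaussianSymbol A γ z) = π * (m * (log (A / m) + 1)) := by
  have hA : 0 < A := hm.trans_le hmA
  rw [integral_eq_toReal_lintegral_meas_lt volume
      (ae_of_all _ fun z => le_min hm.le (gaussianSymbol_pos hA z).le)
      (by fun_prop),
    lintegral_meas_lt_min, setLIntegral_congr_fun measurableSet_Ioo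
      fun u hu => volume_setOf_lt_gaussianSymbol hA hγ hu.1,
    lintegral_Ioo_ofReal_mul_log_div pi_pos.le hm hmA, ENNReal.toReal_ofReal]
  have := log_nonneg ((one_le_div hm).mpr hmA)
  positivity

theorem integral_max_zero_half_log_gaussianSymbol_of_le (hγ : γ ≠ 0) {m : ℝ} (hm : 0 < m)
    (hmA : m ≤ A) :
    ∫ z, max 0 (1 / 2 * log (gaussianSymbol A γ z / m)) = π * log (A / m) ^ 2 / 4 := by
  have hA : 0 < A := hm.trans_le hmA
  have hc : 0 ≤ log (A / m) := log_nonneg ((one_le_div hm).mpr hmA)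
  have hlevel : ∀ u ∈ Ioi (0 : ℝ),
      volume {z | u < max 0 (1 / 2 * log (gaussianSymbol A γ z / m))}
        = ENNReal.ofReal (π * (log (A / m) - 2 * u)) := by
    intro u (hu : 0 < u)
    simp_rw [lt_max_zero_half_log_div_iff hu hm (gaussianSymbol_pos hA _)]
    rw [volume_setOf_lt_gaussianSymbol hA hγ (by positivity), div_mul_eq_div_div, log_div
      (div_pos hA hm).ne' (exp_ne_zero _), log_exp]
  rw [integral_eq_toReal_lintegral_meas_lt volume (ae_of_all _ fun _ => le_max_left 0 _)
      (by fun_prop),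
    setLIntegral_congr_fun measurableSet_Ioi hlevel,
    lintegral_Ioi_ofReal_mul_sub_two_mul pi_pos.le hc, ENNReal.toReal_ofReal (by positivity)]

-- Junk value: the integrand is the constant `m`, not integrable on `ℝ²` unless `m = 0`.
theorem integral_min_gaussianSymbol_of_nonpos (hA : 0 < A) {m : ℝ} (hm : m ≤ 0) :
    ∫ z, min m (gaussianSymbol A γ z) = 0 := by
  rw [integral_congr_ae (ae_of_all _ fun z =>
    min_eq_left (hm.trans (gaussianSymbol_pos hA z).le)), integral_const]
  simp [Measure.real, measure_univ_of_isAddLeftInvariant]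

theorem integral_min_gaussianSymbol (hA : 0 < A) (hγ : γ ≠ 0) {m : ℝ} (hm : 0 < m) :
    ∫ z, min m (gaussianSymbol A γ z) = π * (min m A * (log (A / min m A) + 1)) := by
  have hcut : ∀ z, min m (gaussianSymbol A γ z) = min (min m A) (gaussianSymbol A γ z) :=
    fun z => by rw [min_assoc, min_eq_right (gaussianSymbol_le hA.le z)]
  simp_rw [hcut]
  exact integral_min_gaussianSymbol_of_le hγ (lt_min hm hA) (min_le_right _ _)

theorem integral_max_zero_half_log_gaussianSymbol (hA : 0 < A) (hγ : γ ≠ 0) {m : ℝ}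
    (hm : 0 < m) :
    ∫ z, max 0 (1 / 2 * log (gaussianSymbol A γ z / m)) = π * log (A / min m A) ^ 2 / 4 := by
  rcases le_total m A with hmA | hAm
  · rw [min_eq_left hmA]
    exact integral_max_zero_half_log_gaussianSymbol_of_le hγ hm hmA
  · have hzero : ∀ z, max 0 (1 / 2 * log (gaussianSymbol A γ z / m)) = 0 := fun z =>
      max_eq_left <| mul_nonpos_of_nonneg_of_nonpos (by norm_num) <|
        log_nonpos (div_pos (gaussianSymbol_pos hA z) hm).le
          ((div_le_one hm).mpr ((gaussianSymbol_le hA.le z).trans hAm))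
    simp only [hzero, integral_zero, min_eq_right hAm, div_self hA.ne', log_one]
    ring

end gaussianSymbol

def IsLambertWm1 (W : ℝ → ℝ) : Prop :=
  ∀ x : ℝ, -1 / exp 1 ≤ x → x < 0 → W x * exp (W x) = x ∧ W x ≤ -1

theorem mul_exp_injOn_Iic : InjOn (fun x : ℝ => x * exp x) (Iic (-1)) := by
  refine (strictAntiOn_of_deriv_neg (convex_Iic _) (by fun_prop) fun x hx => ?_).injOn
  rw [interior_Iic] at hx
  rw [(hasDerivAt_id' x |>.fun_mul (hasDerivAt_exp x)).deriv]
  nlinarith [exp_pos x, mem_Iio.mp hx]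

theorem IsLambertWm1.apply_neg_inv_exp_mul {W : ℝ → ℝ} (hW : IsLambertWm1 W) {s c : ℝ}
    (hs : 1 ≤ s) (hc : 0 ≤ c) (h : (c + 1) * s = exp c) :
    W (-1 / (exp 1 * s)) = -(c + 1) := by
  have hs0 : 0 < s := one_pos.trans_le hs
  obtain ⟨hWexp, hWle⟩ := hW (-1 / (exp 1 * s))
    (by
      rw [neg_div, neg_div, neg_le_neg_iff]
      exact div_le_div_of_nonneg_left zero_le_one (exp_pos 1)
        (le_mul_of_one_le_right (exp_pos 1).le hs))
    (div_neg_of_neg_of_pos (by norm_num) (by positivity))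
  have hval : -(c + 1) * exp (-(c + 1)) = -1 / (exp 1 * s) := by
    rw [exp_neg, exp_add, ← h]
    field_simp
  exact mul_exp_injOn_Iic hWle (show -(c + 1) ≤ -1 by linarith) (hWexp.trans hval.symm)

/-- Closed-form reverse-waterfilling rate for the Gaussian symbol (Example 3, `r = 1`):
with `Φ₁(t,ω) = (σ²/(2π)) exp(-(γ⁻²t² + γ²ω²))` and total mean energy `E = ∬ Φ₁ = σ²/2`,
if `λ` satisfies `∬ min{λ, Φ₁} = E/SDR`, then
`(1/(2π)) ∬ max{0, ½ ln(Φ₁/λ)} = (1/8)[W₋₁(-1/(e·SDR)) + 1]²`, where `W₋₁` is the lower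
branch of the Lambert W function (`W₋₁(x) e^{W₋₁(x)} = x`, `W₋₁(x) ≤ -1` on `[-1/e, 0)`). -/
theorem heat_source_rate_distortion_closed_form
    (SDR σ γ : ℝ) (hSDR : 1 ≤ SDR) (hσ : 0 < σ) (hγ : 0 < γ)
    (Wm1 : ℝ → ℝ)
    (hWm1 : ∀ x : ℝ, -1 / Real.exp 1 ≤ x → x < 0 →
      Wm1 x * Real.exp (Wm1 x) = x ∧ Wm1 x ≤ -1)
    (Φ1 : ℝ × ℝ → ℝ)
    (hΦ1 : ∀ t ω : ℝ, Φ1 (t, ω) =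
      σ ^ 2 / (2 * π) * Real.exp (-(γ ^ (-2 : ℤ) * t ^ 2 + γ ^ 2 * ω ^ 2)))
    (lam : ℝ)
    (hlam : (∫ z : ℝ × ℝ, min lam (Φ1 z)) = (σ ^ 2 / 2) / SDR) :
    (1 / (2 * π)) * ∫ z : ℝ × ℝ, max 0 ((1 / 2) * Real.log (Φ1 z / lam)) =
      (1 / 8) * (Wm1 (-1 / (Real.exp 1 * SDR)) + 1) ^ 2 := by
  set A := σ ^ 2 / (2 * π) with hA_def
  have hA : 0 < A := by positivity
  obtain rfl : Φ1 = gaussianSymbol A γ := funext fun z => hΦ1 z.1 z.2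
  have hSDR0 : 0 < SDR := one_pos.trans_le hSDR
  have hlam0 : 0 < lam := by
    by_contra! hlam_nonpos
    rw [integral_min_gaussianSymbol_of_nonpos hA hlam_nonpos] at hlam
    have : 0 < σ ^ 2 / 2 / SDR := by positivity
    linarith
  have hE : σ ^ 2 / 2 = π * A := by rw [hA_def]; field_simp
  rw [integral_min_gaussianSymbol hA hγ.ne' hlam0, hE] at hlam
  rw [integral_max_zero_half_log_gaussianSymbol hA hγ.ne' hlam0]
  set m := min lam A
  set c := log (A / m)
  have hm : 0 < m := lt_min hlam0 hA
  have hc : 0 ≤ c := log_nonneg ((one_le_div hm).mpr (min_le_right _ _))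
  have hAm : A = m * exp c := by rw [exp_log (div_pos hA hm)]; field_simp
  have hkey : (c + 1) * SDR = exp c := by
    rw [hAm, eq_div_iff hSDR0.ne'] at hlam
    exact mul_left_cancel₀ (by positivity : π * m ≠ 0) (by linear_combination hlam)
  rw [IsLambertWm1.apply_neg_inv_exp_mul hWm1 hSDR hc hkey]
  field_simp
  ring
end
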